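/- arXiv:2409.11177 — 11 statements merged into one kernel-verified Lean document; each statement's English description precedes it below -/
import Mathlib

section
/- Fix real numbers K, α ≥ 0, β ≥ α, and N ∈ (−∞,0) ∪ (2,∞]. The two inequalities −3α + 1 + β − K + [K − (α−1)² − β²/(N−2)]·c² ≥ 0 and −3α + 1 + β − K + [K − (α−1)² + β(α−1)]·c² ≥ 0 hold for every c ∈ [0,1) if and only if β − α² − α + min( −K + (α−1)², −β²/(N−2), β(α−1) ) ≥ 0. -/
open Real

lemma grushin_aux (A B : ℝ) :
    (∀ c : ℝ, 0 ≤ c → c < 1 → A + B * c ^ 2 ≥ 0) ↔ 0 ≤ A ∧ 0 ≤ A + B := by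
  constructor
  · intro h
    have hA : 0 ≤ A := by simpa using h 0 le_rfl one_pos
    refine ⟨hA, ?_⟩
    by_contra hc
    push_neg at hc
    have hB : B < 0 := by linarith
    set t : ℝ := (A / (-B) + 1) / 2 with ht
    have h0 : 0 ≤ A / (-B) := div_nonneg hA (by linarith)
    have h1 : A / (-B) < 1 := by
      rw [div_lt_one (by linarith)]; linarith
    have ht0 : 0 ≤ t := by simp only [ht]; linarith
    have ht1 : t < 1 := by simp only [ht]; linarith
    have hs := h (Real.sqrt t) (Real.sqrt_nonneg t) (by
      rw [show (1:ℝ) = Real.sqrt 1 by simp]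
      exact Real.sqrt_lt_sqrt ht0 ht1)
    rw [Real.sq_sqrt ht0] at hs
    have hgt : A / (-B) < t := by simp only [ht]; linarith
    have : (-B) * (A / (-B)) < (-B) * t := by
      exact mul_lt_mul_of_pos_left hgt (by linarith)
    rw [mul_div_cancel₀ A (by linarith : -B ≠ 0)] at this
    linarith
  · rintro ⟨hA, hAB⟩ c hc hc1
    have hc2 : c ^ 2 ≤ 1 := by nlinarith
    nlinarith [mul_nonneg hAB (sq_nonneg c), mul_nonneg hA (sub_nonneg.2 hc2)]

lemma grushin_min3 (X a b c : ℝ) :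
    0 ≤ X + min a (min b c) ↔ 0 ≤ X + a ∧ 0 ≤ X + b ∧ 0 ≤ X + c := by
  constructor
  · intro h
    have h1 := min_le_left a (min b c)
    have h2 := (min_le_right a (min b c)).trans (min_le_left b c)
    have h3 := (min_le_right a (min b c)).trans (min_le_right b c)
    exact ⟨by linarith, by linarith, by linarith⟩
  · rintro ⟨h1, h2, h3⟩
    rcases le_total a (min b c) with h | h
    · rwa [min_eq_left h]
    · rw [min_eq_right h]
      rcases le_total b c with h' | h'
      · rwa [min_eq_left h']
      · rwa [min_eq_right h']

/-- Characterization of `Ric_{N,V} ≥ K` on the α-Grushin open hemisphere: for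
`K ∈ ℝ`, `α ≥ 0`, `β ≥ α` and `N ∈ (−∞,0) ∪ (2,∞]` (with `β²/(N−2)` read as `0`
when `N = ∞`), the two coefficient inequalities hold for every `c = cos x ∈ [0,1)`
iff `β − α² − α + min(−K+(α−1)², −β²/(N−2), β(α−1)) ≥ 0`. -/
theorem grushin_hemisphere_ricci_bound_iff (K α β : ℝ) (N : EReal)
    (hα : 0 ≤ α) (hβ : α ≤ β) (hN : N < 0 ∨ (2 : EReal) < N)
    (T : ℝ) (hT : T = if N = ⊤ then 0 else β ^ 2 / (N.toReal - 2)) :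
    (∀ c : ℝ, 0 ≤ c → c < 1 →
        -3 * α + 1 + β - K + (K - (α - 1) ^ 2 - T) * c ^ 2 ≥ 0 ∧
        -3 * α + 1 + β - K + (K - (α - 1) ^ 2 + β * (α - 1)) * c ^ 2 ≥ 0) ↔
      β - α ^ 2 - α + min (-K + (α - 1) ^ 2) (min (-T) (β * (α - 1))) ≥ 0 := by
  constructor
  · intro h
    have H1 := (grushin_aux _ _).1 (fun c hc hc' => (h c hc hc').1)
    have H2 := (grushin_aux _ _).1 (fun c hc hc' => (h c hc hc').2)
    rw [ge_iff_le, grushin_min3]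
    refine ⟨by nlinarith [H1.1], by nlinarith [H1.2], by nlinarith [H2.2]⟩
  · intro h
    rw [ge_iff_le, grushin_min3] at h
    intro c hc hc'
    exact ⟨(grushin_aux _ _).2 ⟨by nlinarith [h.1], by nlinarith [h.2.1]⟩ c hc hc',
           (grushin_aux _ _).2 ⟨by nlinarith [h.1], by nlinarith [h.2.2]⟩ c hc hc'⟩
end

section
/- Fix real numbers K, α ≥ 0, β ≥ α, and N ∈ (−∞,0) ∪ (2,∞]. The two inequalities −3α + 1 + β + K + [−K − (α−1)² − β²/(N−2)]·c² ≥ 0 and −3α + 1 + β + K + [−K − (α−1)² + β(α−1)]·c² ≥ 0 hold for every c ∈ [1,∞) if and only if min( −K − (α−1)², β − α² − α ) + min( −β²/(N−2), β(α−1) ) ≥ 0. -/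
open Real

lemma aux_quad_ineq (p q : ℝ) :
    (∀ c : ℝ, 1 ≤ c → 0 ≤ p + q * c ^ 2) ↔ 0 ≤ q ∧ 0 ≤ p + q := by
  constructor
  · intro h
    refine ⟨?_, by have := h 1 le_rfl; linarith⟩
    by_contra hq
    push_neg at hq
    set c := max 1 (p / (-q) + 1) with hc
    have hc1 : (1:ℝ) ≤ c := le_max_left _ _
    have hc2 : p / (-q) + 1 ≤ c := le_max_right _ _
    have hcc : c ≤ c ^ 2 := by nlinarith
    have h1 := h c hc1
    have hq0 : q ≠ 0 := ne_of_lt hq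
    have e1 : q * (p / (-q) + 1) = -p + q := by
      rw [div_neg, mul_add, mul_one, mul_neg, mul_comm q (p / q), div_mul_cancel₀ p hq0]
    have e2 : q * c ≤ q * (p / (-q) + 1) := mul_le_mul_of_nonpos_left hc2 hq.le
    have e3 : q * c ^ 2 ≤ q * c := mul_le_mul_of_nonpos_left hcc hq.le
    linarith
  · rintro ⟨hq, hpq⟩ c hc
    have h2 : (1:ℝ) ≤ c ^ 2 := by nlinarith
    nlinarith [mul_nonneg hq (by linarith : (0:ℝ) ≤ c ^ 2 - 1)]

/-- Characterization of `Ric_{N,V} ≥ K` on the α-Grushin hyperbolic open half-plane: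
for `K ∈ ℝ`, `α ≥ 0`, `β ≥ α` and `N ∈ (−∞,0) ∪ (2,∞]` (with `β²/(N−2)` read as `0`
when `N = ∞`), the two coefficient inequalities hold for every `c = cosh x ∈ [1,∞)`
iff `min(−K−(α−1)², β−α²−α) + min(−β²/(N−2), β(α−1)) ≥ 0`. -/
theorem grushin_hyperbolic_ricci_bound_iff (K α β : ℝ) (N : EReal)
    (hα : 0 ≤ α) (hβ : α ≤ β) (hN : N < 0 ∨ (2 : EReal) < N)
    (T : ℝ) (hT : T = if N = ⊤ then 0 else β ^ 2 / (N.toReal - 2)) :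
    (∀ c : ℝ, 1 ≤ c →
        -3 * α + 1 + β + K + (-K - (α - 1) ^ 2 - T) * c ^ 2 ≥ 0 ∧
        -3 * α + 1 + β + K + (-K - (α - 1) ^ 2 + β * (α - 1)) * c ^ 2 ≥ 0) ↔
      min (-K - (α - 1) ^ 2) (β - α ^ 2 - α) + min (-T) (β * (α - 1)) ≥ 0 := by
  constructor
  · intro h
    have h1 := (aux_quad_ineq (-3 * α + 1 + β + K) (-K - (α - 1) ^ 2 - T)).1
      (fun c hc => (h c hc).1)
    have h2 := (aux_quad_ineq (-3 * α + 1 + β + K) (-K - (α - 1) ^ 2 + β * (α - 1))).1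
      (fun c hc => (h c hc).2)
    obtain ⟨h11, h12⟩ := h1
    obtain ⟨h21, h22⟩ := h2
    rcases min_cases (-K - (α - 1) ^ 2) (β - α ^ 2 - α) with ⟨e, _⟩ | ⟨e, _⟩ <;>
      rcases min_cases (-T) (β * (α - 1)) with ⟨f, _⟩ | ⟨f, _⟩ <;>
      rw [e, f] <;> linarith
  · intro h c hc
    have q1 : min (-K - (α - 1) ^ 2) (β - α ^ 2 - α) + min (-T) (β * (α - 1))
        ≤ (-K - (α - 1) ^ 2) + (-T) :=
      add_le_add (min_le_left _ _) (min_le_left _ _)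
    have q2 : min (-K - (α - 1) ^ 2) (β - α ^ 2 - α) + min (-T) (β * (α - 1))
        ≤ (β - α ^ 2 - α) + (-T) :=
      add_le_add (min_le_right _ _) (min_le_left _ _)
    have q3 : min (-K - (α - 1) ^ 2) (β - α ^ 2 - α) + min (-T) (β * (α - 1))
        ≤ (-K - (α - 1) ^ 2) + (β * (α - 1)) :=
      add_le_add (min_le_left _ _) (min_le_right _ _)
    have q4 : min (-K - (α - 1) ^ 2) (β - α ^ 2 - α) + min (-T) (β * (α - 1))
        ≤ (β - α ^ 2 - α) + (β * (α - 1)) :=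
      add_le_add (min_le_right _ _) (min_le_right _ _)
    constructor
    · have := (aux_quad_ineq (-3 * α + 1 + β + K) (-K - (α - 1) ^ 2 - T)).2
        ⟨by linarith, by linarith⟩ c hc
      linarith
    · have := (aux_quad_ineq (-3 * α + 1 + β + K) (-K - (α - 1) ^ 2 + β * (α - 1))).2
        ⟨by linarith, by linarith⟩ c hc
      linarith
end

section
/- Let α ≥ 0, β ≥ α and N ∈ (2,∞). If β − α² − α + min( (α−1)², −β²/(N−2), β(α−1) ) ≥ 0 (i.e. the α-Grushin hemisphere satisfies RCD(0,N)), then there exists K > 0 such that β − α² − α + min( −K + (α−1)², −β²/(N−2), β(α−1) ) ≥ 0 (i.e. it satisfies RCD(K,N)). -/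
open Real

/-- If the α-Grushin hemisphere satisfies `RCD(0,N)` for some `N ∈ (2,∞)`, i.e.
`β − α² − α + min((α−1)², −β²/(N−2), β(α−1)) ≥ 0`, then there is `K > 0` with
`β − α² − α + min(−K+(α−1)², −β²/(N−2), β(α−1)) ≥ 0`, i.e. it satisfies `RCD(K,N)`. -/
theorem grushin_hemisphere_improve_to_positive_K (α β N : ℝ)
    (hα : 0 ≤ α) (hβ : α ≤ β) (hN : 2 < N)
    (h0 : β - α ^ 2 - α +
        min ((α - 1) ^ 2) (min (-(β ^ 2 / (N - 2))) (β * (α - 1))) ≥ 0) :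
    ∃ K : ℝ, 0 < K ∧
      β - α ^ 2 - α +
        min (-K + (α - 1) ^ 2) (min (-(β ^ 2 / (N - 2))) (β * (α - 1))) ≥ 0 := by
  set m2 : ℝ := min (-(β ^ 2 / (N - 2))) (β * (α - 1)) with hm2
  have hNpos : (0:ℝ) < N - 2 := by linarith
  have hβ0 : 0 ≤ β := le_trans hα hβ
  -- m2 < (α-1)^2
  have hlt : m2 < (α - 1) ^ 2 := by
    rcases eq_or_lt_of_le hβ0 with h | h
    · have hα0 : α = 0 := le_antisymm (h ▸ hβ) hα
      have : m2 ≤ -(β ^ 2 / (N - 2)) := min_le_left _ _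
      have hle : m2 ≤ 0 := by
        have : (0:ℝ) ≤ β ^ 2 / (N - 2) := div_nonneg (sq_nonneg _) hNpos.le
        linarith
      have : (α - 1) ^ 2 = 1 := by rw [hα0]; ring
      linarith
    · have hlt2 : -(β ^ 2 / (N - 2)) < 0 := by
        have : 0 < β ^ 2 / (N - 2) := div_pos (by positivity) hNpos
        linarith
      have := min_le_left (-(β ^ 2 / (N - 2))) (β * (α - 1))
      have := sq_nonneg (α - 1)
      linarith
  refine ⟨(α - 1) ^ 2 - m2, by linarith, ?_⟩
  have hmin0 : min ((α - 1) ^ 2) m2 = m2 := min_eq_right hlt.le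
  have hmin1 : min (-((α - 1) ^ 2 - m2) + (α - 1) ^ 2) m2 = m2 := by
    rw [show -((α - 1) ^ 2 - m2) + (α - 1) ^ 2 = m2 by ring, min_self]
  rw [hmin1]
  rw [hmin0] at h0
  exact h0
end

section
/- For every α ≥ 1 and every real N ≥ 2 + 4α(α+1), there exist β > α and K < 0 such that min( −K − (α−1)², β − α² − α ) + min( −β²/(N−2), β(α−1) ) ≥ 0. -/
open Real

/-- For every `α ≥ 1` and every real `N ≥ 2 + 4α(α+1)` there exist `β > α` and
`K < 0` such that `min(−K−(α−1)², β−α²−α) + min(−β²/(N−2), β(α−1)) ≥ 0`: the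
α-Grushin hyperbolic half-plane with β-weighted measure satisfies `RCD(K,N)`. -/
theorem grushin_hyperbolic_RCD_negative_K (α N : ℝ) (hα : 1 ≤ α)
    (hN : 2 + 4 * α * (α + 1) ≤ N) :
    ∃ β K : ℝ, α < β ∧ K < 0 ∧
      min (-K - (α - 1) ^ 2) (β - α ^ 2 - α) +
        min (-(β ^ 2 / (N - 2))) (β * (α - 1)) ≥ 0 := by
  set s : ℝ := α * (α + 1) with hs
  have hs2 : (2 : ℝ) ≤ s := by nlinarith
  have hN2 : 4 * s ≤ N - 2 := by linarith
  have hN2pos : (0 : ℝ) < N - 2 := by linarith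
  refine ⟨2 * s, -((α - 1) ^ 2 + s + 1), ?_, ?_, ?_⟩
  · nlinarith
  · nlinarith [sq_nonneg (α - 1)]
  · have h1 : s ≤ min (-(-((α - 1) ^ 2 + s + 1)) - (α - 1) ^ 2) (2 * s - α ^ 2 - α) := by
      apply le_min <;> nlinarith
    have h2 : -s ≤ min (-((2 * s) ^ 2 / (N - 2))) (2 * s * (α - 1)) := by
      apply le_min
      · rw [neg_le_neg_iff, div_le_iff₀ hN2pos]
        nlinarith
      · nlinarith
    linarith
end

section
/- For all real α ≥ 0, β ≥ α and N ∈ (2,∞), the inequality min( −(α−1)², β − α² − α ) + min( −β²/(N−2), β(α−1) ) ≥ 0 fails. That is, there are no α ≥ 0, β ≥ α, N ∈ (2,∞) for which the α-Grushin hyperbolic half-plane satisfies Ric_{N,V} ≥ 0. -/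
open Real

theorem eq_one_and_eq_zero_of_min_add_min_nonneg {α β c x y : ℝ} (hc : 0 < c)
    (h : 0 ≤ min (-(α - 1) ^ 2) x + min (-(β ^ 2 / c)) y) : α = 1 ∧ β = 0 := by
  have hsum : (α - 1) ^ 2 + β ^ 2 / c ≤ 0 := by
    linarith [min_le_left (-(α - 1) ^ 2) x, min_le_left (-(β ^ 2 / c)) y]
  have hβ : 0 ≤ β ^ 2 / c := by positivity
  obtain ⟨hα1, hβ0⟩ := (add_eq_zero_iff_of_nonneg (sq_nonneg _) hβ).1
    (le_antisymm hsum (by positivity))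
  refine ⟨by simpa [sub_eq_zero] using hα1, ?_⟩
  simpa [hc.ne'] using hβ0

theorem grushin_hyperbolic_no_RCD_zero_N_general (α β N : ℝ)
    (hβ : α ≤ β) (hN : 2 < N) :
    ¬ (min (-(α - 1) ^ 2) (β - α ^ 2 - α) +
        min (-(β ^ 2 / (N - 2))) (β * (α - 1)) ≥ 0) := by
  intro h
  obtain ⟨rfl, rfl⟩ := eq_one_and_eq_zero_of_min_add_min_nonneg (sub_pos.2 hN) h
  linarith

/-- For all `α ≥ 0`, `β ≥ α` and `N ∈ (2,∞)`, the inequality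
`min(−(α−1)², β−α²−α) + min(−β²/(N−2), β(α−1)) ≥ 0` fails: the α-Grushin hyperbolic
half-plane never satisfies `Ric_{N,V} ≥ 0` with finite `N > 2`. -/
theorem grushin_hyperbolic_no_RCD_zero_N (α β N : ℝ)
    (hα : 0 ≤ α) (hβ : α ≤ β) (hN : 2 < N) :
    ¬ (min (-(α - 1) ^ 2) (β - α ^ 2 - α) +
        min (-(β ^ 2 / (N - 2))) (β * (α - 1)) ≥ 0) :=
  grushin_hyperbolic_no_RCD_zero_N_general α β N hβ hN
end

section
/- For real α ≥ 0 and β ≥ α, the inequality min( −(α−1)², β − α² − α ) + min( 0, β(α−1) ) ≥ 0 holds if and only if α = 1 and β ≥ 2. -/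
open Real

/-- For `α ≥ 0` and `β ≥ α`, the condition `Ric_{∞,V} ≥ 0` on the α-Grushin
hyperbolic half-plane, i.e. `min(−(α−1)², β−α²−α) + min(0, β(α−1)) ≥ 0`, holds
if and only if `α = 1` and `β ≥ 2`. -/
theorem grushin_hyperbolic_RCD_zero_infty_iff (α β : ℝ)
    (hα : 0 ≤ α) (hβ : α ≤ β) :
    (min (-(α - 1) ^ 2) (β - α ^ 2 - α) + min 0 (β * (α - 1)) ≥ 0) ↔
      (α = 1 ∧ 2 ≤ β) := by
  constructor
  · intro h
    have h1 := min_le_left (-(α - 1) ^ 2) (β - α ^ 2 - α)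
    have h2 := min_le_right (-(α - 1) ^ 2) (β - α ^ 2 - α)
    have h3 := min_le_left (0 : ℝ) (β * (α - 1))
    have hα1 : α = 1 := by nlinarith [sq_nonneg (α - 1)]
    subst hα1
    refine ⟨rfl, by nlinarith⟩
  · rintro ⟨rfl, hb⟩
    norm_num
    linarith
end

section
/- For every α ≥ 1 there exist β > α and N ∈ (−∞,0) such that min( −(α−1)², β − α² − α ) + min( −β²/(N−2), β(α−1) ) ≥ 0. -/
open Real

/-- For every `α ≥ 1` there exist `β > α` and `N < 0` such that
`min(−(α−1)², β−α²−α) + min(−β²/(N−2), β(α−1)) ≥ 0`: the α-Grushin hyperbolic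
half-plane with β-weighted measure satisfies `CD(0,N)` for some negative `N`. -/
theorem grushin_hyperbolic_CD_zero_negative_N (α : ℝ) (hα : 1 ≤ α) :
    ∃ β N : ℝ, α < β ∧ N < 0 ∧
      min (-(α - 1) ^ 2) (β - α ^ 2 - α) +
        min (-(β ^ 2 / (N - 2))) (β * (α - 1)) ≥ 0 := by
  refine ⟨α ^ 2 + α + (α - 1) ^ 2, -1, by nlinarith, by norm_num, ?_⟩
  have h1 : min (-(α - 1) ^ 2) (α ^ 2 + α + (α - 1) ^ 2 - α ^ 2 - α) = -(α - 1) ^ 2 :=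
    min_eq_left (by nlinarith)
  have e : -((α ^ 2 + α + (α - 1) ^ 2) ^ 2 / ((-1 : ℝ) - 2)) =
      (α ^ 2 + α + (α - 1) ^ 2) ^ 2 / 3 := by ring
  have h2 : (α - 1) ^ 2 ≤ min (-((α ^ 2 + α + (α - 1) ^ 2) ^ 2 / ((-1 : ℝ) - 2)))
      ((α ^ 2 + α + (α - 1) ^ 2) * (α - 1)) := by
    refine le_min ?_ (by nlinarith)
    rw [e]
    nlinarith [sq_nonneg (α - 1), sq_nonneg α, sq_nonneg (α ^ 2 + α), sq_nonneg ((α-1)^2 - 1)]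
  rw [h1]
  linarith
end

section
/- For real β, γ ≥ 0, the two inequalities (6γ−1)x² − 2x³ + βx⁴ ≥ 0 and 2γ − x + (β−2)x² ≥ 0 hold for every x > 0 if and only if min( β(6γ−1), 8(β−2)γ ) ≥ 1. -/
/-!
Dividing the first inequality by `x²`, both conditions say that a quadratic `a x² + b x + c` with
`b < 0` is nonnegative on `x > 0`. Such a quadratic must have `a > 0` (otherwise it tends to `-∞`),
and then its minimum over all of `ℝ` is attained at `x = -b / (2a) > 0`, so the condition is
exactly `b² ≤ 4ac`. This gives `1 ≤ β(6γ - 1)` and `1 ≤ 8(β - 2)γ`.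
-/

section Quadratic

variable {K : Type*} [Field K] [LinearOrder K] [IsStrictOrderedRing K] {a b c : K}

theorem pos_of_forall_pos_quadratic_nonneg (hb : b < 0)
    (h : ∀ x > 0, 0 ≤ a * x ^ 2 + b * x + c) : 0 < a := by
  by_contra! ha
  -- at this `x` the linear part is `b x + c = c - |c| - 1 < 0`, while `a x² ≤ 0`
  set x := (|c| + 1) / -b
  have hx : 0 < x := div_pos (by positivity) (neg_pos.mpr hb)
  have hbx : b * x = -(|c| + 1) := by
    simp only [x]
    field_simp [hb.ne]
  nlinarith [h x hx, mul_nonpos_of_nonpos_of_nonneg ha (sq_nonneg x), le_abs_self c]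

theorem forall_pos_quadratic_nonneg_iff (hb : b < 0) :
    (∀ x > 0, 0 ≤ a * x ^ 2 + b * x + c) ↔ 0 < a ∧ b ^ 2 ≤ 4 * a * c := by
  constructor
  · intro h
    have ha := pos_of_forall_pos_quadratic_nonneg hb h
    have hvertex := h (-b / (2 * a)) (div_pos (neg_pos.mpr hb) (by positivity))
    refine ⟨ha, ?_⟩
    have hvalue : a * (-b / (2 * a)) ^ 2 + b * (-b / (2 * a)) + c
        = (4 * a * c - b ^ 2) / (4 * a) := by
      field_simp; ring
    rw [hvalue, le_div_iff₀ (by positivity), zero_mul] at hvertex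
    linarith
  · rintro ⟨ha, hdisc⟩ x -
    have hsq : 4 * a * (a * x ^ 2 + b * x + c) = (2 * a * x + b) ^ 2 + (4 * a * c - b ^ 2) := by ring
    nlinarith [sq_nonneg (2 * a * x + b)]

end Quadratic

theorem grushin_infty_ricci_nonneg_iff_general (β γ : ℝ) (hγ : 0 ≤ γ) :
    (∀ x : ℝ, 0 < x →
        (6 * γ - 1) * x ^ 2 - 2 * x ^ 3 + β * x ^ 4 ≥ 0 ∧
        2 * γ - x + (β - 2) * x ^ 2 ≥ 0) ↔
      min (β * (6 * γ - 1)) (8 * (β - 2) * γ) ≥ 1 := by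
  have hquartic (x : ℝ) (hx : 0 < x) : (6 * γ - 1) * x ^ 2 - 2 * x ^ 3 + β * x ^ 4 ≥ 0 ↔
      0 ≤ β * x ^ 2 + (-2) * x + (6 * γ - 1) := by
    rw [ge_iff_le, show (6 * γ - 1) * x ^ 2 - 2 * x ^ 3 + β * x ^ 4
      = x ^ 2 * (β * x ^ 2 + (-2) * x + (6 * γ - 1)) by ring,
      mul_nonneg_iff_of_pos_left (by positivity)]
  have hquadratic (x : ℝ) : 2 * γ - x + (β - 2) * x ^ 2 ≥ 0 ↔
      0 ≤ (β - 2) * x ^ 2 + (-1) * x + 2 * γ := by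
    rw [ge_iff_le]; ring_nf
  rw [forall₂_congr fun x hx => and_congr (hquartic x hx) (hquadratic x), forall₂_and,
    forall_pos_quadratic_nonneg_iff (by norm_num), forall_pos_quadratic_nonneg_iff (by norm_num),
    ge_iff_le, le_min_iff]
  constructor
  · rintro ⟨⟨-, h₁⟩, ⟨-, h₂⟩⟩
    constructor <;> linarith
  · rintro ⟨h₁, h₂⟩
    have hβ₂ : 0 < β - 2 := by
      by_contra! h
      nlinarith [mul_nonpos_of_nonpos_of_nonneg h hγ]
    exact ⟨⟨by linarith, by linarith⟩, hβ₂, by linarith⟩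

/-- For `β, γ ≥ 0`, the two inequalities `(6γ−1)x² − 2x³ + βx⁴ ≥ 0` and
`2γ − x + (β−2)x² ≥ 0` hold for every `x > 0` iff `min(β(6γ−1), 8(β−2)γ) ≥ 1`. -/
theorem grushin_infty_ricci_nonneg_iff (β γ : ℝ) (hβ : 0 ≤ β) (hγ : 0 ≤ γ) :
    (∀ x : ℝ, 0 < x →
        (6 * γ - 1) * x ^ 2 - 2 * x ^ 3 + β * x ^ 4 ≥ 0 ∧
        2 * γ - x + (β - 2) * x ^ 2 ≥ 0) ↔
      min (β * (6 * γ - 1)) (8 * (β - 2) * γ) ≥ 1 :=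
  grushin_infty_ricci_nonneg_iff_general β γ hγ
end

section
/- For all real β, γ ≥ 0, all K ∈ ℝ and all N ∈ (2,∞), the inequality (6γ−1)x² − 2x³ + βx⁴ − (2γ+βx²)²/(N−2) ≥ Kx⁶ fails for some x > 0. In particular, there are no β, γ ≥ 0, K ∈ ℝ and N ∈ (2,∞) such that the ∞-Grushin half-plane satisfies Ric_{N,V} ≥ K. -/
open Real

set_option maxHeartbeats 1000000

/-- For all `β, γ ≥ 0`, all `K ∈ ℝ` and all `N ∈ (2,∞)`, the inequality
`(6γ−1)x² − 2x³ + βx⁴ − (2γ+βx²)²/(N−2) ≥ Kx⁶` fails for some `x > 0`: the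
∞-Grushin half-plane never satisfies `Ric_{N,V} ≥ K` with finite `N > 2`. -/
theorem grushin_infty_no_RCD_finite_N (β γ K N : ℝ)
    (hβ : 0 ≤ β) (hγ : 0 ≤ γ) (hN : 2 < N) :
    ∃ x : ℝ, 0 < x ∧
      ¬ ((6 * γ - 1) * x ^ 2 - 2 * x ^ 3 + β * x ^ 4 -
          (2 * γ + β * x ^ 2) ^ 2 / (N - 2) ≥ K * x ^ 6) := by
  have hN2 : (0:ℝ) < N - 2 := by linarith
  have hden : (0:ℝ) < 8 * (β + |K| + 1) := by positivity
  obtain ⟨x, hx0, hx1, hxa2, hxb2⟩ :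
      ∃ x : ℝ, 0 < x ∧ x ≤ 1 ∧ x ^ 2 ≤ 2 / (9 * (N - 2)) ∧
        x ^ 2 ≤ 1 / (8 * (β + |K| + 1)) := by
    set a := Real.sqrt (2 / (9 * (N - 2))) with ha
    set b := Real.sqrt (1 / (8 * (β + |K| + 1))) with hb
    have ha0 : 0 < a := Real.sqrt_pos.mpr (by positivity)
    have hb0 : 0 < b := Real.sqrt_pos.mpr (by positivity)
    refine ⟨min 1 (min a b), lt_min one_pos (lt_min ha0 hb0), min_le_left _ _, ?_, ?_⟩
    · have hxa : min 1 (min a b) ≤ a := le_trans (min_le_right _ _) (min_le_left _ _)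
      have h2 := Real.sq_sqrt (le_of_lt (show (0:ℝ) < 2 / (9 * (N - 2)) by positivity))
      have hxpos : 0 ≤ min 1 (min a b) := le_of_lt (lt_min one_pos (lt_min ha0 hb0))
      nlinarith
    · have hxb : min 1 (min a b) ≤ b := le_trans (min_le_right _ _) (min_le_right _ _)
      have h2 := Real.sq_sqrt (le_of_lt (show (0:ℝ) < 1 / (8 * (β + |K| + 1)) by positivity))
      have hxpos : 0 ≤ min 1 (min a b) := le_of_lt (lt_min one_pos (lt_min ha0 hb0))
      nlinarith
  refine ⟨x, hx0, ?_⟩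
  intro h
  rw [le_div_iff₀ hden] at hxb2
  have hx2le1 : x ^ 2 ≤ 1 := by nlinarith
  have h1 : (β + |K| + 1) * x ^ 2 ≤ 1 / 8 := by nlinarith
  have hβx2 : β * x ^ 2 ≤ 1 / 8 := by nlinarith [abs_nonneg K, sq_nonneg x]
  have hKx4 : |K| * x ^ 4 ≤ 1 / 8 := by
    nlinarith [abs_nonneg K, sq_nonneg x, sq_nonneg (x ^ 2)]
  have hK6 : K * x ^ 6 ≥ - (x ^ 2 / 8) := by
    have hK : -|K| ≤ K := neg_abs_le K
    have h4 : (0:ℝ) ≤ x ^ 4 := by positivity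
    have h2 : (0:ℝ) ≤ x ^ 2 := by positivity
    have hK4 : -(1/8) ≤ K * x ^ 4 := by nlinarith
    have := mul_le_mul_of_nonneg_right hK4 h2
    nlinarith [this]
  have h18 : 18 * γ ^ 2 * x ^ 2 ≤ 4 * γ ^ 2 / (N - 2) := by
    rw [le_div_iff₀ (show (0:ℝ) < 9 * (N - 2) by positivity)] at hxa2
    rw [le_div_iff₀ hN2]
    nlinarith [sq_nonneg γ, mul_le_mul_of_nonneg_left hxa2 (sq_nonneg γ)]
  have hquad : 6 * γ * x ^ 2 ≤ x ^ 2 / 2 + 18 * γ ^ 2 * x ^ 2 := by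
    nlinarith [sq_nonneg ((6 * γ - 1) * x)]
  have hsq : 4 * γ ^ 2 / (N - 2) ≤ (2 * γ + β * x ^ 2) ^ 2 / (N - 2) := by
    have t : 0 ≤ β * x ^ 2 := mul_nonneg hβ (sq_nonneg x)
    have hnum : 4 * γ ^ 2 ≤ (2 * γ + β * x ^ 2) ^ 2 := by
      nlinarith [mul_nonneg hγ t, sq_nonneg (β * x ^ 2)]
    exact div_le_div₀ (by positivity) hnum hN2 (le_refl _)
  have hβ4 : β * x ^ 4 ≤ x ^ 2 / 8 := by nlinarith [sq_nonneg x]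
  have hx3 : 0 < x ^ 3 := pow_pos hx0 3
  have hx2 : 0 < x ^ 2 := pow_pos hx0 2
  linarith [h, hK6, hsq, h18, hquad, hβ4]
end

section
/- Let (X,d) be a complete, locally compact length (geodesic) metric space and let M ⊆ X be an open geodesically convex subset (every geodesic with endpoints in M lies in M, and any two points of M are joined by a geodesic). Then for every compact set C ⊆ M, the closure of the geodesic hull of C (the union of all geodesics with both endpoints in C) is contained in M. -/
open Set

variable {X : Type*}

/-- A (constant-speed, minimising) geodesic parametrised on `[0,1]`. -/
def IsGeodesicCurve [MetricSpace X] (γ : ℝ → X) : Prop :=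
  ∀ s ∈ Icc (0 : ℝ) 1, ∀ t ∈ Icc (0 : ℝ) 1,
    dist (γ s) (γ t) = |t - s| * dist (γ 0) (γ 1)

/-- The geodesic hull of a set: the union of (the images on `[0,1]` of) all
geodesics with both endpoints in the set. -/
def geodesicHull [MetricSpace X] (C : Set X) : Set X :=
  {p | ∃ γ : ℝ → X, IsGeodesicCurve γ ∧ γ 0 ∈ C ∧ γ 1 ∈ C ∧ ∃ t ∈ Icc (0 : ℝ) 1, γ t = p}

/-!
A point `p` lies on a geodesic from `a` to `b` as soon as `d(a,p) + d(p,b) = d(a,b)`: the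
concatenation of geodesics `a → p` and `p → b`, run at the right speeds, is `d(a,b)`-Lipschitz
on `[0,1]`, and a `d(a,b)`-Lipschitz curve from `a` to `b` is a geodesic because the triangle
inequality leaves no room for any of its subarcs to be shorter. So in a geodesic space the
geodesic hull of `C` is `{p | ∃ a b ∈ C, d(a,p) + d(p,b) = d(a,b)}`, the projection of a closed
subset of `(C × C) × X` along the compact factor; it is therefore closed, and it lies in `M` by
convexity.
-/

open scoped NNReal

theorem LipschitzOnWith.congr {α β : Type*} [PseudoEMetricSpace α] [PseudoEMetricSpace β]
    {f g : α → β} {K : ℝ≥0} {s : Set α} (hf : LipschitzOnWith K f s) (hfg : EqOn f g s) :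
    LipschitzOnWith K g s := fun x hx y hy => by
  rw [← hfg hx, ← hfg hy]
  exact hf hx hy

theorem LipschitzOnWith.Icc_union {α : Type*} [PseudoMetricSpace α] {f : ℝ → α} {K : ℝ≥0}
    {a b c : ℝ} (h₁ : LipschitzOnWith K f (Icc a b)) (h₂ : LipschitzOnWith K f (Icc b c)) :
    LipschitzOnWith K f (Icc a c) := by
  refine LipschitzOnWith.of_dist_le_mul fun x hx y hy => ?_
  wlog hxy : x ≤ y generalizing x y
  · rw [dist_comm, dist_comm x]
    exact this y hy x hx (le_of_not_ge hxy)
  rcases le_total y b with hyb | hby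
  · exact h₁.dist_le_mul x ⟨hx.1, hxy.trans hyb⟩ y ⟨hx.1.trans hxy, hyb⟩
  rcases le_total b x with hbx | hxb
  · exact h₂.dist_le_mul x ⟨hbx, hx.2⟩ y ⟨hbx.trans hxy, hy.2⟩
  calc dist (f x) (f y) ≤ dist (f x) (f b) + dist (f b) (f y) := dist_triangle _ _ _
    _ ≤ K * dist x b + K * dist b y :=
        add_le_add (h₁.dist_le_mul x ⟨hx.1, hxb⟩ b ⟨hx.1.trans hxb, le_rfl⟩)
          (h₂.dist_le_mul b ⟨le_rfl, hby.trans hy.2⟩ y ⟨hby, hy.2⟩)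
    _ = K * dist x y := by
        rw [← mul_add, dist_add_dist_of_mem_segment (by rw [segment_eq_Icc hxy]; exact ⟨hxb, hby⟩)]

theorem IsCompact.isClosed_setOf_exists_mem {α β : Type*} [TopologicalSpace α]
    [TopologicalSpace β] {K : Set α} (hK : IsCompact K) {F : Set (α × β)} (hF : IsClosed F) :
    IsClosed {b | ∃ a ∈ K, (a, b) ∈ F} := by
  have := isCompact_iff_compactSpace.1 hK
  convert isClosedMap_snd_of_compactSpace _
    (hF.preimage (continuous_subtype_val.prodMap continuous_id : Continuous
      (fun z : K × β => ((z.1 : α), z.2))))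
  ext b
  simp

section

variable [MetricSpace X] {γ : ℝ → X}

theorem isGeodesicCurve_iff_lipschitzOnWith :
    IsGeodesicCurve γ ↔ LipschitzOnWith (nndist (γ 0) (γ 1)) γ (Icc 0 1) := by
  refine ⟨fun hγ => .of_dist_le_mul fun s hs u hu => ?_, fun hγ s hs u hu => ?_⟩
  · rw [hγ s hs u hu, coe_nndist, Real.dist_eq, abs_sub_comm, mul_comm]
  wlog hsu : s ≤ u generalizing s u
  · rw [dist_comm, this u hu s hs (le_of_not_ge hsu), abs_sub_comm]
  have hlip : ∀ s ∈ Icc (0 : ℝ) 1, ∀ u ∈ Icc (0 : ℝ) 1, s ≤ u →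
      dist (γ s) (γ u) ≤ (u - s) * dist (γ 0) (γ 1) := fun s hs u hu hsu => by
    have := hγ.dist_le_mul s hs u hu
    rwa [coe_nndist, Real.dist_eq, abs_of_nonpos (sub_nonpos.2 hsu), neg_sub, mul_comm] at this
  have hle := hlip s hs u hu hsu
  have h0s := hlip 0 ⟨le_rfl, zero_le_one⟩ s hs hs.1
  have hu1 := hlip u hu 1 ⟨zero_le_one, le_rfl⟩ hu.2
  have := dist_triangle4 (γ 0) (γ s) (γ u) (γ 1)
  rw [abs_of_nonneg (sub_nonneg.2 hsu)]
  nlinarith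

theorem IsGeodesicCurve.lipschitzOnWith_rescale (hγ : IsGeodesicCurve γ) {c ℓ : ℝ}
    {D : ℝ≥0} (hℓ : 0 < ℓ) (hlen : dist (γ 0) (γ 1) = ℓ * D) :
    LipschitzOnWith D (fun s => γ ((s - c) / ℓ)) (Icc c (c + ℓ)) := by
  have hmaps : ∀ s ∈ Icc c (c + ℓ), (s - c) / ℓ ∈ Icc (0 : ℝ) 1 := fun s hs =>
    ⟨div_nonneg (sub_nonneg.2 hs.1) hℓ.le, (div_le_one hℓ).2 (by linarith [hs.2])⟩
  refine LipschitzOnWith.of_dist_le_mul fun s hs u hu => le_of_eq ?_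
  rw [hγ _ (hmaps s hs) _ (hmaps u hu), hlen, Real.dist_eq, abs_sub_comm, ← sub_div, abs_div,
    abs_of_pos hℓ, sub_sub_sub_cancel_right]
  field_simp

theorem IsGeodesicCurve.concat {γ₁ γ₂ : ℝ → X} (h₁ : IsGeodesicCurve γ₁)
    (h₂ : IsGeodesicCurve γ₂) (hjoin : γ₁ 1 = γ₂ 0) {t : ℝ} (ht : t ∈ Ioo 0 1)
    (hlen₁ : dist (γ₁ 0) (γ₁ 1) = t * dist (γ₁ 0) (γ₂ 1))
    (hlen₂ : dist (γ₂ 0) (γ₂ 1) = (1 - t) * dist (γ₁ 0) (γ₂ 1)) :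
    IsGeodesicCurve (fun s => if s ≤ t then γ₁ (s / t) else γ₂ ((s - t) / (1 - t))) := by
  have ht1 : 0 < 1 - t := sub_pos.2 ht.2
  rw [isGeodesicCurve_iff_lipschitzOnWith]
  simp only [if_pos ht.1.le, zero_div, if_neg (not_le.2 ht.2), div_self ht1.ne']
  set D := nndist (γ₁ 0) (γ₂ 1)
  have hfirst := h₁.lipschitzOnWith_rescale (c := 0) (D := D) ht.1 hlen₁
  have hsecond := h₂.lipschitzOnWith_rescale (c := t) (D := D) ht1 hlen₂
  rw [zero_add] at hfirst
  rw [add_sub_cancel] at hsecond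
  refine (hfirst.congr fun s hs => ?_).Icc_union (hsecond.congr fun s hs => ?_)
  · simp only [sub_zero, if_pos hs.2]
  · rcases hs.1.eq_or_lt with rfl | hts
    · simp only [sub_self, zero_div, le_rfl, if_pos, div_self ht.1.ne', hjoin]
    · simp only [if_neg (not_le.2 hts)]

theorem IsGeodesicCurve.dist_add_dist (hγ : IsGeodesicCurve γ) {t : ℝ}
    (ht : t ∈ Icc (0 : ℝ) 1) : dist (γ 0) (γ t) + dist (γ t) (γ 1) = dist (γ 0) (γ 1) := by
  rw [hγ 0 ⟨le_rfl, zero_le_one⟩ t ht, hγ t ht 1 ⟨zero_le_one, le_rfl⟩, sub_zero,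
    abs_of_nonneg ht.1, abs_of_nonneg (sub_nonneg.2 ht.2)]
  ring

theorem exists_isGeodesicCurve_through
    (hgeo : ∀ p q : X, ∃ γ : ℝ → X, IsGeodesicCurve γ ∧ γ 0 = p ∧ γ 1 = q) {a b p : X}
    (h : dist a p + dist p b = dist a b) :
    ∃ γ : ℝ → X, IsGeodesicCurve γ ∧ γ 0 = a ∧ γ 1 = b ∧ ∃ t ∈ Icc (0 : ℝ) 1, γ t = p := by
  obtain ⟨γ, hγ, rfl, rfl⟩ := hgeo a b
  by_cases hpa : p = γ 0
  · exact ⟨γ, hγ, rfl, rfl, 0, ⟨le_rfl, zero_le_one⟩, hpa.symm⟩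
  by_cases hpb : p = γ 1
  · exact ⟨γ, hγ, rfl, rfl, 1, ⟨zero_le_one, le_rfl⟩, hpb.symm⟩
  have hap : 0 < dist (γ 0) p := dist_pos.2 (Ne.symm hpa)
  have hpb : 0 < dist p (γ 1) := dist_pos.2 hpb
  set D := dist (γ 0) (γ 1)
  have hD : 0 < D := by linarith
  obtain ⟨γ₁, hγ₁, hγ₁0, hγ₁1⟩ := hgeo (γ 0) p
  obtain ⟨γ₂, hγ₂, hγ₂0, hγ₂1⟩ := hgeo p (γ 1)
  set t := dist (γ 0) p / D
  have ht : t ∈ Ioo 0 1 := ⟨div_pos hap hD, (div_lt_one hD).2 (by linarith)⟩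
  have hlen₁ : dist (γ 0) p = t * D := (div_mul_cancel₀ _ hD.ne').symm
  have hlen₂ : dist p (γ 1) = (1 - t) * D := by rw [sub_mul, one_mul, ← hlen₁]; linarith
  refine ⟨_, hγ₁.concat hγ₂ (hγ₁1.trans hγ₂0.symm) ht ?_ ?_, ?_, ?_, t,
    Ioo_subset_Icc_self ht, ?_⟩
  · rwa [hγ₁0, hγ₁1, hγ₂1]
  · rwa [hγ₁0, hγ₂0, hγ₂1]
  · simp only [if_pos ht.1.le, zero_div, hγ₁0]
  · simp only [if_neg (not_le.2 ht.2), div_self (sub_pos.2 ht.2).ne', hγ₂1]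
  · simp only [le_rfl, if_pos, div_self ht.1.ne', hγ₁1]

theorem geodesicHull_eq_setOf_dist_add_dist_eq
    (hgeo : ∀ p q : X, ∃ γ : ℝ → X, IsGeodesicCurve γ ∧ γ 0 = p ∧ γ 1 = q) (C : Set X) :
    geodesicHull C = {p | ∃ a ∈ C, ∃ b ∈ C, dist a p + dist p b = dist a b} := by
  ext p
  constructor
  · rintro ⟨γ, hγ, h0, h1, t, ht, rfl⟩
    exact ⟨_, h0, _, h1, IsGeodesicCurve.dist_add_dist hγ ht⟩
  · rintro ⟨a, ha, b, hb, h⟩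
    obtain ⟨γ, hγ, rfl, rfl, hp⟩ := exists_isGeodesicCurve_through hgeo h
    exact ⟨γ, hγ, ha, hb, hp⟩

theorem IsCompact.isClosed_geodesicHull
    (hgeo : ∀ p q : X, ∃ γ : ℝ → X, IsGeodesicCurve γ ∧ γ 0 = p ∧ γ 1 = q) {C : Set X}
    (hC : IsCompact C) : IsClosed (geodesicHull C) := by
  have hF : IsClosed {z : (X × X) × X | dist z.1.1 z.2 + dist z.2 z.1.2 = dist z.1.1 z.1.2} :=
    isClosed_eq (by fun_prop) (by fun_prop)
  convert (hC.prod hC).isClosed_setOf_exists_mem hF using 1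
  rw [geodesicHull_eq_setOf_dist_add_dist_eq hgeo]
  ext p
  simp [and_assoc]

end

theorem closure_geodesicHull_subset_general [MetricSpace X]
    (hgeo : ∀ p q : X, ∃ γ : ℝ → X, IsGeodesicCurve γ ∧ γ 0 = p ∧ γ 1 = q)
    (M : Set X)
    (hMconv : ∀ γ : ℝ → X, IsGeodesicCurve γ → γ 0 ∈ M → γ 1 ∈ M →
      ∀ t ∈ Icc (0 : ℝ) 1, γ t ∈ M)
    (C : Set X) (hC : IsCompact C) (hCM : C ⊆ M) :
    closure (geodesicHull C) ⊆ M := by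
  rw [(hC.isClosed_geodesicHull hgeo).closure_eq]
  rintro _ ⟨γ, hγ, h0, h1, t, ht, rfl⟩
  exact hMconv γ hγ (hCM h0) (hCM h1) t ht

/-- In a complete, locally compact geodesic metric space, if `M` is an open
geodesically convex subset, then for every compact `C ⊆ M` the closure of the
geodesic hull of `C` is contained in `M`. -/
theorem closure_geodesicHull_subset [MetricSpace X] [CompleteSpace X]
    [LocallyCompactSpace X]
    (hgeo : ∀ p q : X, ∃ γ : ℝ → X, IsGeodesicCurve γ ∧ γ 0 = p ∧ γ 1 = q)
    (M : Set X) (hMopen : IsOpen M)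
    (hMconv : ∀ γ : ℝ → X, IsGeodesicCurve γ → γ 0 ∈ M → γ 1 ∈ M →
      ∀ t ∈ Icc (0 : ℝ) 1, γ t ∈ M)
    (C : Set X) (hC : IsCompact C) (hCM : C ⊆ M) :
    closure (geodesicHull C) ⊆ M :=
  closure_geodesicHull_subset_general hgeo M hMconv C hC hCM
end

section
/- Let f(x) = |sin x|^α / cos x on (0, π/2) with α ≥ 0. Then f'(x)/f(x) = α·cot x + tan x, and hence (f'/f)(x)² − (f'/f)'(x) = (3α − 1 + (α−1)² cos² x)/sin² x. In particular, the Gaussian curvature of the metric dx⊗dx + (cos²x/sin^{2α}x) dy⊗dy equals −( (f'/f)' − (f'/f)² ) = (3α − 1 + (α−1)² cos² x)/sin² x, which is strictly positive for all x ∈ (0, π/2) whenever α ≥ 1/2. -/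
open Real Set Filter

/- On `(0, π/2)` the warping function `f = sin^α / cos` is positive, so `f'/f` is its logarithmic
derivative `α cot + tan`; differentiating once more and using `sin² + cos² = 1` gives the
curvature, whose numerator is at least `3α - 1 > 0` once `α ≥ 1/2`. -/

lemma logDeriv_fun_rpow_const {f : ℝ → ℝ} {x : ℝ} (hf : DifferentiableAt ℝ f x)
    (hx : 0 < f x) (p : ℝ) : logDeriv (fun t => f t ^ p) x = p * logDeriv f x := by
  rw [logDeriv_apply, logDeriv_apply, (hf.hasDerivAt.rpow_const (Or.inl hx.ne')).deriv,
    rpow_sub_one hx.ne']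
  field_simp

lemma logDeriv_sin_rpow_div_cos (α : ℝ) {x : ℝ} (hs : 0 < sin x) (hc : cos x ≠ 0) :
    logDeriv (fun t => sin t ^ α / cos t) x = α * (cos x / sin x) + tan x := by
  rw [logDeriv_div x (rpow_pos_of_pos hs α).ne' hc
      (differentiableAt_sin.rpow_const (Or.inl hs.ne')) differentiableAt_cos,
    logDeriv_fun_rpow_const differentiableAt_sin hs, Real.logDeriv_sin, Real.logDeriv_cos,
    Pi.neg_apply, cot_eq_cos_div_sin, sub_neg_eq_add]

lemma logDeriv_abs_sin_rpow_div_cos (α : ℝ) {x : ℝ} (hx : x ∈ Ioo 0 (π / 2)) :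
    logDeriv (fun t => |sin t| ^ α / cos t) x = α * (cos x / sin x) + tan x := by
  have hIoo : Ioo 0 (π / 2) ⊆ Ioo 0 π := Ioo_subset_Ioo_right (by linarith [pi_pos])
  have habs : (fun t => |sin t| ^ α / cos t) =ᶠ[nhds x] fun t => sin t ^ α / cos t := by
    filter_upwards [isOpen_Ioo.mem_nhds hx] with t ht
    rw [abs_of_pos (sin_pos_of_mem_Ioo (hIoo ht))]
  rw [(logDeriv_congr_nhds habs).eq_of_nhds]
  exact logDeriv_sin_rpow_div_cos α (sin_pos_of_mem_Ioo (hIoo hx))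
    (cos_pos_of_mem_Ioo ⟨by linarith [hx.1, pi_pos], hx.2⟩).ne'

lemma hasDerivAt_cos_div_sin {x : ℝ} (hx : sin x ≠ 0) :
    HasDerivAt (fun t => cos t / sin t) (-1 / sin x ^ 2) x := by
  refine ((hasDerivAt_cos x).div (hasDerivAt_sin x) hx).congr_deriv ?_
  rw [← sin_sq_add_cos_sq x]
  ring

lemma mul_cot_add_tan_sq_sub_deriv (α : ℝ) {x : ℝ} (hs : sin x ≠ 0) (hc : cos x ≠ 0) :
    (α * (cos x / sin x) + tan x) ^ 2 - (α * (-1 / sin x ^ 2) + 1 / cos x ^ 2) =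
      (3 * α - 1 + (α - 1) ^ 2 * cos x ^ 2) / sin x ^ 2 := by
  rw [tan_eq_sin_div_cos]
  field_simp
  linear_combination (sin x ^ 2 + (2 * α - 1) * cos x ^ 2) * sin_sq_add_cos_sq x

lemma grushin_curvature_numerator_pos {α : ℝ} (hα : 1 / 2 ≤ α) (c : ℝ) :
    0 < 3 * α - 1 + (α - 1) ^ 2 * c ^ 2 := by
  nlinarith [sq_nonneg ((α - 1) * c)]

theorem grushin_hemisphere_curvature_general (α : ℝ)
    (f : ℝ → ℝ) (hf : f = fun x => |Real.sin x| ^ α / Real.cos x) :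
    ∀ x ∈ Set.Ioo 0 (π / 2),
      deriv f x / f x = α * (Real.cos x / Real.sin x) + Real.tan x ∧
      (deriv f x / f x) ^ 2 - deriv (fun t => deriv f t / f t) x =
        (3 * α - 1 + (α - 1) ^ 2 * Real.cos x ^ 2) / Real.sin x ^ 2 ∧
      (1 / 2 ≤ α →
        0 < (3 * α - 1 + (α - 1) ^ 2 * Real.cos x ^ 2) / Real.sin x ^ 2) := by
  intro x hx
  have hs : 0 < sin x := sin_pos_of_mem_Ioo ⟨hx.1, hx.2.trans (by linarith [pi_pos])⟩
  have hc : 0 < cos x := cos_pos_of_mem_Ioo ⟨by linarith [hx.1, pi_pos], hx.2⟩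
  have hlog : ∀ t ∈ Ioo 0 (π / 2), deriv f t / f t = α * (cos t / sin t) + tan t :=
    fun t ht => hf ▸ logDeriv_abs_sin_rpow_div_cos α ht
  have hderiv : deriv (fun t => deriv f t / f t) x = α * (-1 / sin x ^ 2) + 1 / cos x ^ 2 :=
    (eventuallyEq_of_mem (isOpen_Ioo.mem_nhds hx) hlog).deriv_eq.trans
      (((hasDerivAt_cos_div_sin hs.ne').const_mul α).add (hasDerivAt_tan hc.ne')).deriv
  refine ⟨hlog x hx, ?_, fun hα =>
    div_pos (grushin_curvature_numerator_pos hα _) (by positivity)⟩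
  rw [hderiv, hlog x hx]
  exact mul_cot_add_tan_sq_sub_deriv α hs.ne' hc.ne'

/-- Let `f(x) = |sin x|^α / cos x` on `(0, π/2)` with `α ≥ 0`.  Then
`f'/f = α cot x + tan x`, the Gaussian curvature
`(f'/f)² − (f'/f)' = (3α − 1 + (α−1)² cos²x)/sin²x`, and this is strictly
positive on `(0, π/2)` whenever `α ≥ 1/2`. -/
theorem grushin_hemisphere_curvature (α : ℝ) (hα : 0 ≤ α)
    (f : ℝ → ℝ) (hf : f = fun x => |Real.sin x| ^ α / Real.cos x) :
    ∀ x ∈ Set.Ioo 0 (π / 2),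
      deriv f x / f x = α * (Real.cos x / Real.sin x) + Real.tan x ∧
      (deriv f x / f x) ^ 2 - deriv (fun t => deriv f t / f t) x =
        (3 * α - 1 + (α - 1) ^ 2 * Real.cos x ^ 2) / Real.sin x ^ 2 ∧
      (1 / 2 ≤ α →
        0 < (3 * α - 1 + (α - 1) ^ 2 * Real.cos x ^ 2) / Real.sin x ^ 2) :=
  grushin_hemisphere_curvature_general α f hf
end
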